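/- arXiv:math/0703062 — 2 statements merged into one kernel-verified Lean document; each statement's English description precedes it below -/
import Mathlib

section
/- (Wiener-type inequality) Let φ = Σ_{β∈F_n^+} c_β W_β ∈ F_n^∞(D_f) with ‖φ‖ ≤ 1, where W_i are the weighted left creation operators associated with a positive regular free holomorphic function f. Then for every k ≥ 1, (Σ_{|β|=k} |c_β|²/b_β)^{1/2} ≤ 1 − |c_0|², where c_0 = c_{g_0}. -/
open Filter Topology
open scoped ComplexConjugate ENNReal

namespace NCDomain

/-- Words in the free monoid `F_n^+` on `n` generators. -/
abbrev Word (n : ℕ) := FreeMonoid (Fin n)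

instance {n : ℕ} : DecidableEq (Word n) :=
  inferInstanceAs (DecidableEq (List (Fin n)))

/-- The length `|α|` of a word. -/
def wordLen {n : ℕ} (α : Word n) : ℕ := FreeMonoid.length α

/-- The coefficients `b_α`, defined by `b_{g_0} = 1` and, for `|α| ≥ 1`,
`b_α = Σ_{j=1}^{|α|} Σ_{γ_1⋯γ_j = α, |γ_i| ≥ 1} a_{γ_1}⋯a_{γ_j}`, the sum running over
all ordered factorizations of `α` into nonempty words. -/
noncomputable def bCoeff {n : ℕ} (a : Word n → ℝ) (α : Word n) : ℝ :=
  if α = 1 then 1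
  else ∑' L : {L : List (Word n) // L.prod = α ∧ ∀ w ∈ L, w ≠ 1}, (L.1.map a).prod

/-- `f = Σ_{|α|≥1} a_α X_α` is a positive regular free holomorphic function:
`a_{g_0} = 0`, `a_α ≥ 0`, `a_{g_i} > 0`, and
`limsup_{k→∞} (Σ_{|α|=k} |a_α|²)^{1/(2k)} < ∞`. -/
def PosRegular {n : ℕ} (a : Word n → ℝ) : Prop :=
  a 1 = 0 ∧ (∀ α, 0 ≤ a α) ∧ (∀ i : Fin n, 0 < a (FreeMonoid.of i)) ∧
    ∃ C : ℝ, ∀ᶠ k in atTop,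
      (∑' α : {β : Word n // wordLen β = k}, (a α.1) ^ 2) ≤ C ^ (2 * k)

/-- For a tuple `T` of operators and a word `α = g_{i_1}⋯g_{i_k}`,
the product `T_α = T_{i_1}⋯T_{i_k}` (and `T_{g_0} = I`). -/
noncomputable def opWord {n : ℕ} {H : Type*} [NormedAddCommGroup H] [NormedSpace ℂ H]
    (T : Fin n → H →L[ℂ] H) (α : Word n) : H →L[ℂ] H :=
  ((FreeMonoid.toList α).map T).prod

/-- The full Fock space `F²(H_n)`, realized as `ℓ²` over the free monoid. -/
abbrev Fock (n : ℕ) : Type := lp (fun _ : Word n => ℂ) 2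

/-- The canonical orthonormal basis vector `e_α` of the Fock space. -/
noncomputable def fockBasis {n : ℕ} (α : Word n) : Fock n := lp.single 2 α (1 : ℂ)

/-- `W` is the tuple of weighted left creation operators associated with `f = Σ a_α X_α`:
`W_i e_α = √(b_α / b_{g_i α}) e_{g_i α}`. -/
def IsWeightedShift {n : ℕ} (a : Word n → ℝ) (W : Fin n → Fock n →L[ℂ] Fock n) : Prop :=
  ∀ (i : Fin n) (α : Word n),
    W i (fockBasis α) =
      (Real.sqrt (bCoeff a α / bCoeff a (FreeMonoid.of i * α)) : ℂ) •
        fockBasis (FreeMonoid.of i * α)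

lemma factor_eq_nil {n : ℕ} {L : List (Word n)} (h1 : L.prod = 1) (h2 : ∀ w ∈ L, w ≠ 1) :
    L = [] := by
  cases L with
  | nil => rfl
  | cons w L' =>
    exfalso
    have hlen : FreeMonoid.length ((w :: L').prod) = 0 := by rw [h1]; rfl
    rw [List.prod_cons, FreeMonoid.length_mul] at hlen
    exact h2 w List.mem_cons_self (FreeMonoid.length_eq_zero.mp (by omega))

lemma factorSet_finite_aux {n : ℕ} :
    ∀ (m : ℕ) (α : Word n), wordLen α ≤ m →
      {L : List (Word n) | L.prod = α ∧ ∀ w ∈ L, w ≠ 1}.Finite := by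
  intro m
  induction m with
  | zero =>
    intro α hα
    have h1 : α = 1 := FreeMonoid.length_eq_zero.mp (Nat.le_zero.mp hα)
    subst h1
    refine Set.Finite.subset (Set.finite_singleton ([] : List (Word n))) ?_
    rintro L ⟨hL, hw⟩
    simp [factor_eq_nil hL hw]
  | succ m ih =>
    intro α hα
    by_cases h1 : α = 1
    · subst h1
      refine Set.Finite.subset (Set.finite_singleton ([] : List (Word n))) ?_
      rintro L ⟨hL, hw⟩
      simp [factor_eq_nil hL hw]
    · set g : ℕ → Word n := fun j => FreeMonoid.ofList ((FreeMonoid.toList α).take (j+1)) with hg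
      set d : ℕ → Word n := fun j => FreeMonoid.ofList ((FreeMonoid.toList α).drop (j+1)) with hd
      have hcov : {L : List (Word n) | L.prod = α ∧ ∀ w ∈ L, w ≠ 1} ⊆
          ⋃ j ∈ Finset.range (wordLen α),
            (fun L' => g j :: L') '' {L' : List (Word n) | L'.prod = d j ∧ ∀ w ∈ L', w ≠ 1} := by
        rintro L ⟨hL, hw⟩
        cases L with
        | nil => exact absurd hL.symm (by simpa using h1)
        | cons w L' =>
          have hwne : w ≠ 1 := hw w List.mem_cons_self
          have hw1 : 1 ≤ FreeMonoid.length w := by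
            rcases Nat.eq_zero_or_pos (FreeMonoid.length w) with h | h
            · exact absurd (FreeMonoid.length_eq_zero.mp h) hwne
            · exact h
          rw [List.prod_cons] at hL
          have hsplit : FreeMonoid.toList w ++ FreeMonoid.toList (L'.prod) = FreeMonoid.toList α := by
            rw [← hL]; rfl
          set j : ℕ := FreeMonoid.length w - 1 with hj
          have hj1 : j + 1 = FreeMonoid.length w := by omega
          have hlenα : wordLen α = FreeMonoid.length w + FreeMonoid.length (L'.prod) := by
            rw [wordLen, ← hL, FreeMonoid.length_mul]
          have hjmem : j ∈ Finset.range (wordLen α) := by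
            rw [Finset.mem_range]; omega
          have hwg : w = g j := by
            apply FreeMonoid.toList.injective
            simp only [hg, FreeMonoid.toList_ofList]
            rw [← hsplit]
            exact (List.take_left' hj1.symm).symm
          have hLd : L'.prod = d j := by
            apply FreeMonoid.toList.injective
            simp only [hd, FreeMonoid.toList_ofList]
            rw [← hsplit]
            exact (List.drop_left' hj1.symm).symm
          refine Set.mem_biUnion hjmem ?_
          exact ⟨L', ⟨hLd, fun v hv => hw v (List.mem_cons_of_mem _ hv)⟩, by rw [hwg]⟩
      refine Set.Finite.subset ?_ hcov
      refine Set.Finite.biUnion (Finset.range (wordLen α)).finite_toSet ?_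
      intro j hj
      refine Set.Finite.image _ (ih (d j) ?_)
      have hdl : wordLen (d j) = wordLen α - (j+1) := by
        show ((FreeMonoid.toList α).drop (j+1)).length = _
        rw [List.length_drop]
        rfl
      omega

lemma factorSet_finite {n : ℕ} (α : Word n) :
    {L : List (Word n) | L.prod = α ∧ ∀ w ∈ L, w ≠ 1}.Finite :=
  factorSet_finite_aux (wordLen α) α le_rfl


lemma bCoeff_one {n : ℕ} (a : Word n → ℝ) : bCoeff a 1 = 1 := if_pos rfl

lemma prod_of_list {n : ℕ} (l : List (Fin n)) :
    (List.map FreeMonoid.of l).prod = FreeMonoid.ofList l := by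
  induction l with
  | nil => rfl
  | cons i l ih =>
    rw [List.map_cons, List.prod_cons, ih]
    rfl

lemma prod_of_toList {n : ℕ} (α : Word n) :
    (List.map FreeMonoid.of (FreeMonoid.toList α)).prod = α := by
  rw [prod_of_list]
  exact FreeMonoid.ofList_toList α

lemma bCoeff_pos {n : ℕ} {a : Word n → ℝ} (hreg : PosRegular a) (α : Word n) :
    0 < bCoeff a α := by
  obtain ⟨h0, hnn, hpos, -⟩ := hreg
  rw [bCoeff]
  split_ifs with h
  · norm_num
  · have hfin : Finite {L : List (Word n) // L.prod = α ∧ ∀ w ∈ L, w ≠ 1} :=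
      (factorSet_finite α).to_subtype
    haveI := Fintype.ofFinite {L : List (Word n) // L.prod = α ∧ ∀ w ∈ L, w ≠ 1}
    rw [tsum_fintype]
    have hterm : ∀ L : {L : List (Word n) // L.prod = α ∧ ∀ w ∈ L, w ≠ 1},
        0 ≤ (L.1.map a).prod := by
      intro L
      apply List.prod_nonneg
      intro x hx
      rcases List.mem_map.mp hx with ⟨w, -, rfl⟩
      exact hnn w
    have hL0 : (List.map FreeMonoid.of (FreeMonoid.toList α)).prod = α ∧
        ∀ w ∈ List.map FreeMonoid.of (FreeMonoid.toList α), w ≠ (1 : Word n) := by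
      refine ⟨prod_of_toList α, ?_⟩
      intro w hw
      rcases List.mem_map.mp hw with ⟨i, -, rfl⟩
      exact FreeMonoid.of_ne_one i
    refine Finset.sum_pos' (fun L _ => hterm L) ⟨⟨_, hL0⟩, Finset.mem_univ _, ?_⟩
    apply List.prod_pos
    intro x hx
    rcases List.mem_map.mp hx with ⟨w, hw, rfl⟩
    rcases List.mem_map.mp hw with ⟨i, -, rfl⟩
    exact hpos i



lemma fockBasis_apply {n : ℕ} (β γ : Word n) :
    (fockBasis β : Word n → ℂ) γ = if γ = β then 1 else 0 := by
  rw [fockBasis, lp.single_apply]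
  split_ifs with h
  · subst h; simp [Pi.single_apply]
  · simp [Pi.single_apply, h]

noncomputable def coordCLM {n : ℕ} (γ : Word n) : Fock n →L[ℂ] ℂ :=
  LinearMap.mkContinuous
    { toFun := fun x => x γ
      map_add' := fun x y => rfl
      map_smul' := fun r x => rfl }
    1 (fun x => by
      show ‖x γ‖ ≤ 1 * ‖x‖
      simpa using lp.norm_apply_le_norm (by norm_num : (2 : ℝ≥0∞) ≠ 0) x γ)

@[simp] lemma coordCLM_apply {n : ℕ} (γ : Word n) (x : Fock n) : coordCLM γ x = x γ := rfl

lemma opWord_apply {n : ℕ} {a : Word n → ℝ} (hb : ∀ α, 0 < bCoeff a α)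
    {W : Fin n → Fock n →L[ℂ] Fock n} (hW : IsWeightedShift a W) (β γ : Word n) :
    opWord W β (fockBasis γ) =
      (Real.sqrt (bCoeff a γ / bCoeff a (β * γ)) : ℂ) • fockBasis (β * γ) := by
  have main : ∀ (l : List (Fin n)) (γ : Word n),
      opWord W (FreeMonoid.ofList l) (fockBasis γ) =
        (Real.sqrt (bCoeff a γ / bCoeff a (FreeMonoid.ofList l * γ)) : ℂ) •
          fockBasis (FreeMonoid.ofList l * γ) := by
    intro l
    induction l with
    | nil =>
      intro γ
      have h1 : FreeMonoid.ofList ([] : List (Fin n)) = 1 := rfl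
      rw [h1, one_mul]
      rw [div_self (hb γ).ne']
      simp [opWord, Real.sqrt_one]
    | cons i l ih =>
      intro γ
      have hto : FreeMonoid.toList (FreeMonoid.ofList (i :: l)) = i :: l := rfl
      have hop : opWord W (FreeMonoid.ofList (i :: l)) = W i * opWord W (FreeMonoid.ofList l) := by
        rw [opWord, hto, List.map_cons, List.prod_cons]
        rfl
      rw [hop, ContinuousLinearMap.mul_apply, ih γ, map_smul, hW i (FreeMonoid.ofList l * γ),
        smul_smul]
      have hassoc : FreeMonoid.of i * (FreeMonoid.ofList l * γ) = FreeMonoid.ofList (i :: l) * γ := by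
        rw [← mul_assoc]
        rfl
      rw [hassoc]
      congr 1
      set x := bCoeff a γ
      set y := bCoeff a (FreeMonoid.ofList l * γ)
      set z := bCoeff a (FreeMonoid.ofList (i :: l) * γ)
      have : Real.sqrt (x / y) * Real.sqrt (y / z) = Real.sqrt (x / z) := by
        rw [← Real.sqrt_mul (div_nonneg (hb γ).le (hb _).le)]
        congr 1
        rw [div_mul_div_comm, mul_comm x y, mul_div_mul_left _ _ (hb (FreeMonoid.ofList l * γ)).ne']
      rw [← this]
      push_cast
      ring
  have := main (FreeMonoid.toList β) γ
  rwa [FreeMonoid.ofList_toList] at this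


section Coord

variable {n : ℕ} {a : Word n → ℝ} (hb : ∀ α, 0 < bCoeff a α)
  {W : Fin n → Fock n →L[ℂ] Fock n} (hW : IsWeightedShift a W)
  {c : Word n → ℂ} {φ : Fock n →L[ℂ] Fock n}
  (hφ : ∀ γ : Word n,
    HasSum (fun β : Word n => c β • opWord W β (fockBasis γ)) (φ (fockBasis γ)))

include hb hW hφ

lemma coord_hasSum (γ₀ γ' : Word n) :
    HasSum (fun β : Word n => c β * Real.sqrt (bCoeff a γ₀ / bCoeff a (β * γ₀)) *
      (if γ' = β * γ₀ then 1 else 0)) ((φ (fockBasis γ₀) : Word n → ℂ) γ') := by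
  have h := (coordCLM γ').hasSum (hφ γ₀)
  have h2 : ∀ β : Word n, coordCLM γ' (c β • opWord W β (fockBasis γ₀)) =
      c β * Real.sqrt (bCoeff a γ₀ / bCoeff a (β * γ₀)) * (if γ' = β * γ₀ then 1 else 0) := by
    intro β
    rw [opWord_apply hb hW]
    simp only [map_smul, coordCLM_apply, lp.coeFn_smul, Pi.smul_apply, smul_eq_mul,
      fockBasis_apply]
    ring
  simpa only [h2, coordCLM_apply] using h

lemma coord_one (γ : Word n) :
    (φ (fockBasis 1) : Word n → ℂ) γ = c γ * Real.sqrt (1 / bCoeff a γ) := by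
  have h := coord_hasSum hb hW hφ 1 γ
  simp only [mul_one, bCoeff_one] at h
  have h3 : (fun β : Word n => c β * Real.sqrt (1 / bCoeff a β) * (if γ = β then 1 else 0)) =
      fun β : Word n => if β = γ then c γ * Real.sqrt (1 / bCoeff a γ) else 0 := by
    funext β
    by_cases hβ : β = γ
    · subst hβ; simp
    · rw [if_neg hβ, if_neg (fun hc => hβ hc.symm), mul_zero]
  rw [h3] at h
  exact h.unique (hasSum_ite_eq γ _)

lemma coord_zero {β : Word n} (hβ : β ≠ 1) :
    (φ (fockBasis β) : Word n → ℂ) 1 = 0 := by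
  have h := coord_hasSum hb hW hφ β 1
  have h3 : (fun α : Word n => c α * Real.sqrt (bCoeff a β / bCoeff a (α * β)) *
      (if (1 : Word n) = α * β then 1 else 0)) = fun _ => (0 : ℂ) := by
    funext α
    rw [if_neg, mul_zero]
    intro hc
    have : wordLen (α * β) = 0 := by rw [← hc]; rfl
    rw [wordLen, FreeMonoid.length_mul] at this
    exact hβ (FreeMonoid.length_eq_zero.mp (by omega))
  rw [h3] at h
  exact h.unique hasSum_zero

lemma coord_diag {β γ : Word n} (hlen : wordLen β = wordLen γ) :
    (φ (fockBasis β) : Word n → ℂ) γ = c 1 * (if γ = β then 1 else 0) := by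
  have h := coord_hasSum hb hW hφ β γ
  have h3 : (fun α : Word n => c α * Real.sqrt (bCoeff a β / bCoeff a (α * β)) *
      (if γ = α * β then 1 else 0)) =
      fun α : Word n => if α = 1 then c 1 * (if γ = β then 1 else 0) else 0 := by
    funext α
    by_cases hα : α = 1
    · subst hα
      rw [if_pos rfl, one_mul, div_self (hb β).ne', Real.sqrt_one]
      norm_num
    · rw [if_neg hα, if_neg, mul_zero]
      intro hc
      have h4 : wordLen γ = wordLen α + wordLen β := by
        rw [hc, wordLen, wordLen, wordLen, FreeMonoid.length_mul]
      simp only [wordLen] at h4 hlen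
      exact hα (FreeMonoid.length_eq_zero.mp (by omega))
  rw [h3] at h
  exact h.unique (hasSum_ite_eq 1 _)

end Coord


lemma rpow_two_eq {y : ℝ} : y ^ (2:ℝ) = y ^ (2:ℕ) := by
  rw [show (2:ℝ) = ((2:ℕ):ℝ) by norm_num, Real.rpow_natCast]

lemma norm_sq_eq {n : ℕ} (x : Fock n) :
    ‖x‖ ^ 2 = ∑' β : Word n, ‖(x : Word n → ℂ) β‖ ^ 2 := by
  have h2 : ((2 : ℝ≥0∞)).toReal = (2:ℝ) := by norm_num
  have h := lp.norm_eq_tsum_rpow (p := 2) (by norm_num) x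
  rw [h2] at h
  have hT : (0:ℝ) ≤ ∑' β : Word n, ‖(x : Word n → ℂ) β‖ ^ (2:ℝ) :=
    tsum_nonneg (fun i => Real.rpow_nonneg (norm_nonneg _) _)
  have key : ‖x‖ ^ (2:ℕ) = (∑' β : Word n, ‖(x : Word n → ℂ) β‖ ^ (2:ℝ)) := by
    rw [h, ← Real.rpow_natCast ((∑' β : Word n, ‖(x : Word n → ℂ) β‖ ^ (2:ℝ)) ^ ((1:ℝ)/2)) 2,
      ← Real.rpow_mul hT]
    norm_num
  rw [key]
  exact tsum_congr fun β => rpow_two_eq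

lemma sq_summable {n : ℕ} (x : Fock n) :
    Summable (fun β : Word n => ‖(x : Word n → ℂ) β‖ ^ 2) := by
  have h := (lp.memℓp x).summable (p := 2) (by norm_num)
  refine h.congr (fun β => ?_)
  rw [show ((2:ℝ≥0∞)).toReal = (2:ℝ) by norm_num, rpow_two_eq]


set_option maxHeartbeats 1000000 in
/-- Wiener-type inequality: if `φ = Σ_β c_β W_β ∈ F_n^∞(D_f)` with
`‖φ‖ ≤ 1`, then `(Σ_{|β|=k} |c_β|²/b_β)^{1/2} ≤ 1 − |c_0|²` for every `k ≥ 1`. -/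
theorem wiener_type_inequality {n : ℕ} (a : Word n → ℝ) (hreg : PosRegular a)
    (W : Fin n → Fock n →L[ℂ] Fock n) (hW : IsWeightedShift a W)
    (c : Word n → ℂ) (φ : Fock n →L[ℂ] Fock n)
    (hφ : ∀ γ : Word n,
      HasSum (fun β : Word n => c β • opWord W β (fockBasis γ)) (φ (fockBasis γ)))
    (hnorm : ‖φ‖ ≤ 1) :
    ∀ k : ℕ, 1 ≤ k →
      Real.sqrt (∑' β : {γ : Word n // wordLen γ = k}, ‖c β.1‖ ^ 2 / bCoeff a β.1)
        ≤ 1 - ‖c 1‖ ^ 2 := by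
  intro k hk
  have hb : ∀ α : Word n, 0 < bCoeff a α := bCoeff_pos hreg
  have hu : ∀ γ : Word n, (φ (fockBasis 1) : Word n → ℂ) γ =
      c γ * Real.sqrt (1 / bCoeff a γ) := coord_one hb hW hφ
  set vf : Word n → ℂ :=
    fun β => if wordLen β = k then (φ (fockBasis 1) : Word n → ℂ) β else 0 with hvf
  have hvf_sq : Summable (fun β : Word n => ‖vf β‖ ^ 2) := by
    refine Summable.of_nonneg_of_le (fun β => by positivity) (fun β => ?_)
      (sq_summable (φ (fockBasis 1)))
    by_cases h : wordLen β = k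
    · simp [hvf, h]
    · simp [hvf, h]
  have hvf_mem : Memℓp vf 2 := by
    refine memℓp_gen (hvf_sq.congr fun β => ?_)
    rw [show ((2:ℝ≥0∞)).toReal = (2:ℝ) from by norm_num]
    exact rpow_two_eq.symm
  set v : Fock n := ⟨vf, hvf_mem⟩ with hv
  have hv_coe : (v : Word n → ℂ) = vf := rfl
  set S : ℝ := ∑' β : Word n, ‖vf β‖ ^ 2 with hS
  have hS0 : 0 ≤ S := tsum_nonneg fun β => by positivity
  have hvf1 : vf 1 = 0 := by
    have h0 : wordLen (1 : Word n) = 0 := rfl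
    rw [hvf]
    simp only [h0]
    rw [if_neg (by omega)]
  -- identification of the statement's sum with S
  have hterm : ∀ β : Word n, wordLen β = k → ‖c β‖ ^ 2 / bCoeff a β = ‖vf β‖ ^ 2 := by
    intro β hβ
    have h1 : vf β = c β * Real.sqrt (1 / bCoeff a β) := by
      rw [hvf]; simp only [hβ, if_pos]; exact hu β
    rw [h1, norm_mul, mul_pow]
    have h2 : ‖((Real.sqrt (1 / bCoeff a β) : ℝ) : ℂ)‖ ^ 2 = 1 / bCoeff a β := by
      rw [Complex.norm_real, Real.norm_eq_abs, sq_abs, Real.sq_sqrt (one_div_nonneg.mpr (hb β).le)]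
    rw [h2, mul_one_div]
  have hS_eq : (∑' β : {γ : Word n // wordLen γ = k}, ‖c β.1‖ ^ 2 / bCoeff a β.1) = S := by
    have h1 : (∑' β : {γ : Word n // wordLen γ = k}, ‖c β.1‖ ^ 2 / bCoeff a β.1)
        = ∑' β : {γ : Word n // wordLen γ = k}, ‖vf β.1‖ ^ 2 :=
      tsum_congr fun β => hterm β.1 β.2
    rw [h1, hS]
    exact tsum_subtype_eq_of_support_subset (f := fun β : Word n => ‖vf β‖ ^ 2)
      (s := {γ : Word n | wordLen γ = k})
      (fun β hβ => by
        simp only [Function.mem_support, ne_eq] at hβ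
        by_contra hc
        simp only [Set.mem_setOf_eq] at hc
        apply hβ
        have hv0 : vf β = 0 := by rw [hvf]; exact if_neg hc
        rw [hv0]
        simp)
  -- coordinates of φ v
  have hsingle : HasSum (fun β : Word n => lp.single 2 β (vf β)) v :=
    lp.hasSum_single (by norm_num) v
  have hsm : ∀ β : Word n, lp.single 2 β (vf β) = vf β • fockBasis β := by
    intro β
    rw [fockBasis, ← lp.single_smul]
    congr 1
    rw [smul_eq_mul, mul_one]
  have hφv : ∀ γ' : Word n,
      HasSum (fun β : Word n => vf β * (φ (fockBasis β) : Word n → ℂ) γ')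
        ((φ v : Word n → ℂ) γ') := by
    intro γ'
    have h := ((coordCLM γ').comp φ).hasSum hsingle
    have h2 : ∀ β : Word n, ((coordCLM γ').comp φ) (lp.single 2 β (vf β)) =
        vf β * (φ (fockBasis β) : Word n → ℂ) γ' := by
      intro β
      rw [ContinuousLinearMap.comp_apply, hsm β, map_smul]
      simp only [coordCLM_apply, lp.coeFn_smul, Pi.smul_apply, smul_eq_mul]
    simpa only [h2, ContinuousLinearMap.comp_apply, coordCLM_apply] using h
  have hφv1 : (φ v : Word n → ℂ) 1 = 0 := by
    have h := hφv 1
    have h2 : (fun β : Word n => vf β * (φ (fockBasis β) : Word n → ℂ) 1) =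
        fun _ => (0 : ℂ) := by
      funext β
      by_cases hβ : wordLen β = k
      · rw [coord_zero hb hW hφ (fun hc => by rw [hc] at hβ; exact absurd hβ.symm (by
          have : wordLen (1 : Word n) = 0 := rfl
          omega)), mul_zero]
      · have : vf β = 0 := by rw [hvf]; exact if_neg hβ
        rw [this, zero_mul]
    rw [h2] at h
    exact h.unique hasSum_zero
  have hφvk : ∀ γ' : Word n, wordLen γ' = k →
      (φ v : Word n → ℂ) γ' = c 1 * vf γ' := by
    intro γ' hγ'
    have h := hφv γ'
    have h2 : (fun β : Word n => vf β * (φ (fockBasis β) : Word n → ℂ) γ') =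
        fun β : Word n => if β = γ' then c 1 * vf γ' else 0 := by
      funext β
      by_cases hβ : β = γ'
      · subst hβ
        rw [if_pos rfl, coord_diag hb hW hφ rfl, if_pos rfl, mul_one]
        ring
      · rw [if_neg hβ]
        by_cases hβk : wordLen β = k
        · rw [coord_diag hb hW hφ (by rw [hβk, hγ']), if_neg (fun hc => hβ hc.symm),
            mul_zero, mul_zero]
        · have : vf β = 0 := by rw [hvf]; exact if_neg hβk
          rw [this, zero_mul]
    rw [h2] at h
    exact h.unique (hasSum_ite_eq γ' _)
  set p : ℝ := ‖c 1‖ ^ 2 with hp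
  have hp0 : 0 ≤ p := by positivity
  -- the key parametrized inequality
  have key : ∀ s : ℝ, p + (1 + s * p) ^ 2 * S ≤ 1 + s ^ 2 * p * S := by
    intro s
    set w : ℂ := (s : ℂ) * conj (c 1) with hw
    have hwc : w * c 1 = ((s * p : ℝ) : ℂ) := by
      rw [hw, mul_assoc, mul_comm (conj (c 1)) (c 1), Complex.mul_conj, hp,
        Complex.normSq_eq_norm_sq]
      push_cast
      ring
    have hwnorm : ‖w‖ ^ 2 = s ^ 2 * p := by
      rw [hw, norm_mul, mul_pow, Complex.norm_real, RCLike.norm_conj, Real.norm_eq_abs,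
        sq_abs, hp]
    set x : Fock n := fockBasis 1 + w • v with hx
    have hx_coe : ∀ γ : Word n, (x : Word n → ℂ) γ =
        (fockBasis 1 : Word n → ℂ) γ + w * vf γ := fun γ => rfl
    have hx_norm : ‖x‖ ^ 2 = 1 + s ^ 2 * p * S := by
      rw [norm_sq_eq]
      have hpt : ∀ γ : Word n, ‖(x : Word n → ℂ) γ‖ ^ 2 =
          (if γ = (1 : Word n) then (1 : ℝ) else 0) + s ^ 2 * p * ‖vf γ‖ ^ 2 := by
        intro γ
        rw [hx_coe, fockBasis_apply]
        by_cases hγ : γ = (1 : Word n)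
        · subst hγ
          rw [if_pos rfl, if_pos rfl, hvf1]
          norm_num
        · rw [if_neg hγ, if_neg hγ, zero_add, zero_add, norm_mul, mul_pow, hwnorm]
      rw [tsum_congr hpt, Summable.tsum_add (hasSum_ite_eq (1 : Word n) (1 : ℝ)).summable
        (hvf_sq.mul_left _), tsum_ite_eq, tsum_mul_left]
    set z : Fock n := φ x with hz
    have hzcoe : ∀ γ : Word n, (z : Word n → ℂ) γ =
        (φ (fockBasis 1) : Word n → ℂ) γ + w * ((φ v : Word n → ℂ) γ) := by
      intro γ
      rw [hz, hx, map_add, map_smul]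
      rfl
    have hz1 : (z : Word n → ℂ) 1 = c 1 := by
      rw [hzcoe, hφv1, mul_zero, add_zero, hu 1, bCoeff_one]
      norm_num
    have hzk : ∀ γ : Word n, wordLen γ = k →
        ‖(z : Word n → ℂ) γ‖ ^ 2 = (1 + s * p) ^ 2 * ‖vf γ‖ ^ 2 := by
      intro γ hγ
      have huv : (φ (fockBasis 1) : Word n → ℂ) γ = vf γ := by
        rw [hvf]; exact (if_pos hγ).symm
      rw [hzcoe, hφvk γ hγ, huv]
      have : vf γ + w * (c 1 * vf γ) = (((1 + s * p : ℝ)) : ℂ) * vf γ := by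
        push_cast
        rw [show (w * (c 1 * vf γ)) = (w * c 1) * vf γ from by ring, hwc]
        push_cast
        ring
      rw [this, norm_mul, mul_pow]
      congr 1
      rw [Complex.norm_real, Real.norm_eq_abs, sq_abs]
    have hlow : p + (1 + s * p) ^ 2 * S ≤ ‖z‖ ^ 2 := by
      rw [norm_sq_eq]
      have hg2 : Summable (fun γ : Word n => (1 + s * p) ^ 2 * ‖vf γ‖ ^ 2) :=
        hvf_sq.mul_left _
      have hg1 : Summable (fun γ : Word n => if γ = (1 : Word n) then p else 0) :=
        (hasSum_ite_eq (1 : Word n) p).summable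
      have hle : ∀ γ : Word n,
          (if γ = (1 : Word n) then p else 0) + (1 + s * p) ^ 2 * ‖vf γ‖ ^ 2 ≤
            ‖(z : Word n → ℂ) γ‖ ^ 2 := by
        intro γ
        by_cases hγ : γ = (1 : Word n)
        · subst hγ
          rw [if_pos rfl, hvf1, hz1]
          simp [hp]
        · rw [if_neg hγ, zero_add]
          by_cases hγk : wordLen γ = k
          · rw [hzk γ hγk]
          · have h0 : vf γ = 0 := by rw [hvf]; exact if_neg hγk
            rw [h0]
            have hzn : (0:ℝ) ≤ ‖(z : Word n → ℂ) γ‖ ^ 2 := by positivity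
            simpa using hzn
      calc p + (1 + s * p) ^ 2 * S
          = ∑' γ : Word n, ((if γ = (1 : Word n) then p else 0) +
              (1 + s * p) ^ 2 * ‖vf γ‖ ^ 2) := by
            rw [Summable.tsum_add hg1 hg2, tsum_ite_eq, tsum_mul_left]
        _ ≤ ∑' γ : Word n, ‖(z : Word n → ℂ) γ‖ ^ 2 :=
            Summable.tsum_le_tsum hle (hg1.add hg2) (sq_summable z)
    have hup : ‖z‖ ^ 2 ≤ ‖x‖ ^ 2 := by
      have h1 : ‖z‖ ≤ ‖x‖ := by
        rw [hz]
        exact (φ.le_opNorm x).trans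
          (by nlinarith [norm_nonneg x, φ.le_opNorm x])
      exact pow_le_pow_left₀ (norm_nonneg z) h1 2
    linarith [hlow, hup, hx_norm.le, hx_norm.ge]
  -- conclude
  have hpS : p + S ≤ 1 := by
    have h0 := key 0
    norm_num at h0
    linarith
  have hd0 : 0 ≤ 1 - p := by linarith
  have hSd : S ≤ (1 - p) ^ 2 := by
    rcases eq_or_lt_of_le hd0 with h | h
    · nlinarith
    · set d : ℝ := 1 - p with hd
      have hk2 := key (1 / d)
      have he : 1 + (1 / d) * p = 1 / d := by
        field_simp
        linarith
      rw [he] at hk2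
      have hdd : (1 / d) ^ 2 * d ^ 2 = 1 := by field_simp
      nlinarith [hk2, hdd, hS0, h, mul_pos h h]
  rw [hS_eq]
  exact le_trans (Real.sqrt_le_sqrt hSd) (le_of_eq (Real.sqrt_sq hd0))

end NCDomain
end

section
/- (Existence of the curvature in the case γ > 1) Let γ > 1 and let (t_k)_{k≥0} be a sequence of nonnegative reals satisfying t_0 < ∞ and t_{k+1} ≤ γ t_k + t_1 for all k (with t_1 < ∞, t_k increasing). Then lim_{k→∞} t_k / γ^k exists and is finite; moreover (γ−1)·lim_k t_k/γ^k ≤ t_1. (This is the abstract scheme showing the curvature curv_p(T) = (γ−1) lim_k trace[I − Φ_{p,T}^k(I)]/γ^k exists when trace(I − Φ_{p,T}(I)) < ∞, with γ = Σ_{1≤|α|≤m} a_α/b_α.) -/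
open Filter Topology

/-- existence of the curvature, abstract scheme, case `γ > 1`: if `γ > 1`
and `(t_k)` is a nondecreasing sequence of nonnegative reals with `t_{k+1} ≤ γ t_k + t_1`
for all `k`, then `lim_{k→∞} t_k/γ^k` exists and is finite, and `(γ − 1)·lim ≤ t_1`. -/
theorem curvature_limit_exists (γ : ℝ) (hγ : 1 < γ)
    (t : ℕ → ℝ) (hpos : ∀ k, 0 ≤ t k) (hmono : Monotone t)
    (hrec : ∀ k, t (k + 1) ≤ γ * t k + t 1) :
    ∃ L : ℝ, Tendsto (fun k => t k / γ ^ k) atTop (𝓝 L) ∧ (γ - 1) * L ≤ t 1 := by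
  have hγ0 : 0 < γ := lt_trans one_pos hγ
  have hγ1 : (0:ℝ) < γ - 1 := by linarith
  set c : ℝ := t 1 / (γ - 1) with hc
  have hc0 : 0 ≤ c := div_nonneg (hpos 1) hγ1.le
  set s : ℕ → ℝ := fun k => (t k + c) / γ ^ k with hs
  have hpow : ∀ k : ℕ, (0:ℝ) < γ ^ k := fun k => pow_pos hγ0 k
  have hanti : Antitone s := by
    apply antitone_nat_of_succ_le
    intro k
    rw [hs]
    simp only
    rw [div_le_div_iff₀ (hpow (k+1)) (hpow k)]
    have h1 := hrec k
    have h2 : (γ - 1) * c = t 1 := by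
      rw [hc]; field_simp [hγ1.ne']
    have h3 := hpow k
    have h4 : t (k + 1) + c ≤ γ * (t k + c) := by nlinarith
    rw [pow_succ]
    nlinarith [mul_le_mul_of_nonneg_right h4 h3.le]
  have hbdd : BddBelow (Set.range s) := by
    refine ⟨0, ?_⟩
    rintro x ⟨k, rfl⟩
    exact div_nonneg (by linarith [hpos k]) (hpow k).le
  have htend : Tendsto s atTop (𝓝 (⨅ k, s k)) := tendsto_atTop_ciInf hanti hbdd
  set L : ℝ := ⨅ k, s k with hL
  have hzero : Tendsto (fun k : ℕ => c / γ ^ k) atTop (𝓝 0) := by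
    have h : Tendsto (fun k : ℕ => c * (1/γ) ^ k) atTop (𝓝 (c * 0)) := by
      apply Tendsto.const_mul
      apply tendsto_pow_atTop_nhds_zero_of_lt_one
      · positivity
      · rw [div_lt_one hγ0]; exact hγ
    simpa [div_pow, div_eq_mul_inv] using h
  refine ⟨L, ?_, ?_⟩
  · have : Tendsto (fun k => s k - c / γ ^ k) atTop (𝓝 (L - 0)) := htend.sub hzero
    rw [sub_zero] at this
    convert this using 2 with k
    rw [hs]
    field_simp
    ring
  · have hLs : L ≤ s 1 := ciInf_le hbdd 1
    have : s 1 = (t 1 + c) / γ := by simp [hs]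
    have h2 : (γ - 1) * s 1 = t 1 := by
      rw [this, hc]
      field_simp
      ring
    nlinarith
end
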